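/- arXiv:2211.01063 — 2 statements merged into one kernel-verified Lean document; each statement's English description precedes it below -/
import Mathlib

section
/- Let c and n be positive integers and y = (c,c,…,c) ∈ ℕ^n the constant list. Then the number of nondecreasing invariant parking assortments for y equals the n-th Catalan number: |PA^{inv,↑}_n(y)| = C_n = (1/(n+1))·binom(2n, n). -/
/-!
When every car has length `c`, a car with preference `e` sent first parks on `[e, e + c)`, and
every later car parks entirely below or entirely above that block; as the street ends up full,
`c ∣ e - 1`. Sending first the cars with the `n - i` largest preferences shows `x_i ≤ c i + 1`.
So a nondecreasing invariant assortment is `x = c b + 1` with `b` nondecreasing and `b_i ≤ i`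
(an increasing parking function on the spots `0, …, n - 1`). Conversely, in any order the cars
of such an `x` park block-aligned, as in a classical parking function, because Hall's condition
"at most `n - t` cars prefer a block `≥ t`" survives each parked car. Finally, increasing parking
functions of length `n` are in bijection with Dyck words of semilength `n` (`b_i` is the number
of down-steps before the `i`-th up-step), of which there are `catalan n`.
-/

open Classical in
/-- One car attempts to park on a one-way street with spots `1, …, m`: given the set
`occ` of occupied spots, the car with preference `p` and length `l` parks in spots
`j, j+1, …, j+l-1` for the least `j ≥ p` such that these spots all exist (are `≤ m`)
and are unoccupied; returns the new set of occupied spots, or `none` if parking fails. -/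
noncomputable def parkOne (m : ℕ) (occ : Finset ℕ) (p l : ℕ) : Option (Finset ℕ) :=
  if h : ∃ j, p ≤ j ∧ j + l ≤ m + 1 ∧ ∀ k ∈ Finset.Ico j (j + l), k ∉ occ then
    some (occ ∪ Finset.Ico (Nat.find h) (Nat.find h + l))
  else none

/-- Run the parking-assortment process for the cars `(preference, length)` in order. -/
noncomputable def parkList (m : ℕ) : List (ℕ × ℕ) → Finset ℕ → Option (Finset ℕ)
  | [], occ => some occ
  | c :: rest, occ => (parkOne m occ c.1 c.2).bind (parkList m rest)

/-- `x` is a parking assortment for the list of car lengths `y`. -/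
def IsPA (y x : List ℕ) : Prop :=
  x.length = y.length ∧ (∀ a ∈ x, 1 ≤ a ∧ a ≤ y.sum) ∧
    (parkList y.sum (x.zip y) ∅).isSome

/-- `PA y` is the set of parking assortments for `y`. -/
def PA (y : List ℕ) : Set (List ℕ) := {x | IsPA y x}

/-- `PAinv y` is the set of (permutation-)invariant parking assortments for `y`:
those preference lists all of whose rearrangements are parking assortments for `y`. -/
def PAinv (y : List ℕ) : Set (List ℕ) := {x | ∀ x', x'.Perm x → IsPA y x'}

/-- `y` is minimally invariant if the all-ones list is the only invariant
parking assortment for `y`. -/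
def MinInv (y : List ℕ) : Prop := PAinv y = {List.replicate y.length 1}

section ParkingProcess

open Finset

theorem parkOne_eq_some_iff {m p l : ℕ} {occ occ' : Finset ℕ} :
    parkOne m occ p l = some occ' ↔
      ∃ j, IsLeast {j | p ≤ j ∧ j + l ≤ m + 1 ∧ ∀ k ∈ Ico j (j + l), k ∉ occ} j ∧
        occ' = occ ∪ Ico j (j + l) := by
  unfold parkOne
  split_ifs with h
  · have hleast : IsLeast {j | p ≤ j ∧ j + l ≤ m + 1 ∧ ∀ k ∈ Ico j (j + l), k ∉ occ}
        (Nat.find h) := ⟨Nat.find_spec h, fun _ => Nat.find_min' h⟩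
    refine ⟨?_, ?_⟩
    · rintro ⟨⟩
      exact ⟨_, hleast, rfl⟩
    · rintro ⟨j, hj, rfl⟩
      rw [hj.unique hleast]
  · simp only [false_iff, not_exists, not_and]
    exact fun j hj => absurd ⟨j, hj.1⟩ h

theorem parkList_append (m : ℕ) (L₁ L₂ : List (ℕ × ℕ)) (occ : Finset ℕ) :
    parkList m (L₁ ++ L₂) occ = (parkList m L₁ occ).bind (parkList m L₂) := by
  induction L₁ generalizing occ with
  | nil => rfl
  | cons a L ih => simp [parkList, ih, Option.bind_assoc]

theorem card_eq_of_parkList_eq_some {m : ℕ} {L : List (ℕ × ℕ)} {occ occ' : Finset ℕ}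
    (h : parkList m L occ = some occ') : #occ' = #occ + (L.map Prod.snd).sum := by
  induction L generalizing occ with
  | nil => simp_all [parkList]
  | cons a L ih =>
    obtain ⟨o, ho, hL⟩ := Option.bind_eq_some_iff.mp h
    obtain ⟨j, ⟨⟨-, -, hfree⟩, -⟩, rfl⟩ := parkOne_eq_some_iff.mp ho
    rw [ih hL, card_union_of_disjoint (disjoint_right.mpr hfree), Nat.card_Ico]
    simp only [List.map_cons, List.sum_cons]
    omega

theorem subset_union_Icc_of_parkList_eq_some {m t : ℕ} {L : List (ℕ × ℕ)} {occ occ' : Finset ℕ}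
    (h : parkList m L occ = some occ') (hL : ∀ pc ∈ L, t ≤ pc.1) : occ' ⊆ occ ∪ Icc t m := by
  induction L generalizing occ with
  | nil => simp_all [parkList]
  | cons a L ih =>
    obtain ⟨o, ho, hrest⟩ := Option.bind_eq_some_iff.mp h
    obtain ⟨j, ⟨⟨hpj, hjm, -⟩, -⟩, rfl⟩ := parkOne_eq_some_iff.mp ho
    have hta := hL a List.mem_cons_self
    have hcar : Ico j (j + a.2) ⊆ Icc t m := fun k hk => by
      simp only [mem_Ico, mem_Icc] at hk ⊢
      omega
    exact (ih hrest fun pc hpc => hL pc (List.mem_cons_of_mem _ hpc)).trans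
      (union_subset (union_subset subset_union_left (hcar.trans subset_union_right))
        subset_union_right)

theorem card_union_Ico_inter_range_modEq {occ : Finset ℕ} {c e j : ℕ}
    (hblock : Ico e (e + c) ⊆ occ) (hfree : ∀ k ∈ Ico j (j + c), k ∉ occ) :
    #((occ ∪ Ico j (j + c)) ∩ range e) ≡ #(occ ∩ range e) [MOD c] := by
  have hsep : j + c ≤ e ∨ e + c ≤ j := by
    by_contra! h
    exact hfree (max j e) (by simp only [mem_Ico]; omega) (hblock (by simp only [mem_Ico]; omega))
  rw [union_inter_distrib_right, card_union_of_disjoint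
    (disjoint_of_subset_left inter_subset_left
      (disjoint_of_subset_right inter_subset_left (disjoint_right.mpr hfree)))]
  rcases hsep with hsep | hsep
  · have hbelow : Ico j (j + c) ∩ range e = Ico j (j + c) := inter_eq_left.mpr fun k hk => by
      simp only [mem_Ico, mem_range] at hk ⊢
      omega
    rw [hbelow, Nat.card_Ico, Nat.add_sub_cancel_left]
    exact Nat.add_modEq_left_iff.mpr dvd_rfl
  · have habove : Ico j (j + c) ∩ range e = ∅ := by
      ext k
      simp only [mem_inter, mem_Ico, mem_range, notMem_empty, iff_false]
      omega
    rw [habove, card_empty, add_zero]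

theorem card_inter_range_modEq_of_parkList_eq_some {m c e : ℕ} {L : List (ℕ × ℕ)}
    (hL : ∀ pc ∈ L, pc.2 = c) {occ occ' : Finset ℕ} (h : parkList m L occ = some occ')
    (hblock : Ico e (e + c) ⊆ occ) : #(occ' ∩ range e) ≡ #(occ ∩ range e) [MOD c] := by
  induction L generalizing occ with
  | nil => cases Option.some.inj h; rfl
  | cons a L ih =>
    obtain ⟨o, ho, hrest⟩ := Option.bind_eq_some_iff.mp h
    obtain ⟨j, ⟨⟨-, -, hfree⟩, -⟩, rfl⟩ := parkOne_eq_some_iff.mp ho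
    rw [hL a List.mem_cons_self] at hfree hrest
    exact (ih (fun pc hpc => hL pc (List.mem_cons_of_mem _ hpc)) hrest
      (hblock.trans subset_union_left)).trans (card_union_Ico_inter_range_modEq hblock hfree)

theorem List.zip_replicate_eq_map {α β : Type*} {x : List α} {n : ℕ} (b : β) (h : x.length = n) :
    x.zip (List.replicate n b) = x.map (·, b) := by
  subst h
  induction x <;> simp_all [List.replicate_succ]

theorem isPA_replicate_iff {n c : ℕ} {x : List ℕ} :
    IsPA (List.replicate n c) x ↔ x.length = n ∧ (∀ a ∈ x, 1 ≤ a ∧ a ≤ n * c) ∧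
      (parkList (n * c) (x.map (·, c)) ∅).isSome := by
  simp only [IsPA, List.length_replicate, List.sum_replicate, smul_eq_mul]
  exact ⟨fun ⟨hlen, hx, h⟩ => ⟨hlen, hx, List.zip_replicate_eq_map c hlen ▸ h⟩,
    fun ⟨hlen, hx, h⟩ => ⟨hlen, hx, (List.zip_replicate_eq_map c hlen).symm ▸ h⟩⟩

theorem sum_map_snd_map_pair (x : List ℕ) (c : ℕ) :
    ((x.map (·, c)).map Prod.snd).sum = x.length * c := by
  simp [List.map_map, Function.comp_def]

theorem dvd_sub_one_of_mem_PAinv {n c e : ℕ} {x : List ℕ}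
    (hx : x ∈ PAinv (List.replicate n c)) (he : e ∈ x) : c ∣ e - 1 := by
  obtain ⟨hlen, hrange, hpark⟩ := isPA_replicate_iff.mp (hx _ (List.perm_cons_erase he).symm)
  obtain ⟨occ, hocc⟩ := Option.isSome_iff_exists.mp hpark
  have hfull : occ = Icc 1 (n * c) := by
    have hsub : occ ⊆ Icc 1 (n * c) := by
      simpa using subset_union_Icc_of_parkList_eq_some (t := 1) hocc
        (by simpa using fun a ha => (hrange a ha).1)
    refine eq_of_subset_of_card_le hsub ?_
    rw [card_eq_of_parkList_eq_some hocc, sum_map_snd_map_pair]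
    simp [hlen]
  simp only [List.map_cons, parkList] at hocc
  obtain ⟨o, ho, hrest⟩ := Option.bind_eq_some_iff.mp hocc
  obtain ⟨j, ⟨⟨hej, hjc, -⟩, hleast⟩, rfl⟩ := parkOne_eq_some_iff.mp ho
  obtain rfl : j = e := le_antisymm (hleast ⟨le_rfl, by omega, by simp⟩) hej
  have hmod := card_inter_range_modEq_of_parkList_eq_some (by simp) hrest subset_union_right
  have hbelow : Icc 1 (n * c) ∩ range j = Ico 1 j := by
    ext k
    simp only [mem_inter, mem_Icc, mem_range, mem_Ico]
    omega
  have hblock : Ico j (j + c) ∩ range j = ∅ := by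
    ext k
    simp only [mem_inter, mem_Ico, mem_range, notMem_empty, iff_false]
    omega
  rw [hfull, empty_union, hbelow, hblock, Nat.card_Ico, card_empty] at hmod
  exact Nat.modEq_zero_iff_dvd.mp hmod

theorem getElem_le_of_mem_PAinv {n c : ℕ} {x : List ℕ} (hx : x ∈ PAinv (List.replicate n c))
    (hs : x.Pairwise (· ≤ ·)) (i : ℕ) (hi : i < x.length) : x[i] ≤ c * i + 1 := by
  have hperm : (x.drop i ++ x.take i).Perm x :=
    List.perm_append_comm.trans (by rw [List.take_append_drop])
  obtain ⟨hlen, hrange, hpark⟩ := isPA_replicate_iff.mp (hx _ hperm)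
  have hxi := (hrange x[i] (hperm.mem_iff.mpr (List.getElem_mem hi))).2
  rw [hperm.length_eq] at hlen
  rw [List.map_append, parkList_append, Option.isSome_iff_exists] at hpark
  obtain ⟨_, hbind⟩ := hpark
  obtain ⟨occ, hocc, -⟩ := Option.bind_eq_some_iff.mp hbind
  have hge : ∀ a ∈ x.drop i, x[i] ≤ a := by
    have hsorted := hs.sublist (List.drop_sublist i x)
    rw [List.drop_eq_getElem_cons hi] at hsorted ⊢
    exact List.forall_mem_cons.mpr ⟨le_rfl, (List.pairwise_cons.mp hsorted).1⟩
  have hsub : occ ⊆ Icc x[i] (n * c) := by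
    simpa using subset_union_Icc_of_parkList_eq_some (t := x[i]) hocc fun pc hpc => by
      obtain ⟨a, ha, rfl⟩ := List.mem_map.mp hpc
      exact hge a ha
  have hcard := card_le_card hsub
  rw [card_eq_of_parkList_eq_some hocc, sum_map_snd_map_pair, List.length_drop, Nat.card_Icc,
    card_empty, zero_add, hlen, Nat.sub_mul] at hcard
  have hic : i * c ≤ n * c := Nat.mul_le_mul_right c (by omega)
  rw [mul_comm c i]
  omega

def blockSpots (c : ℕ) (S : Finset ℕ) : Finset ℕ :=
  S.biUnion fun q => Ico (c * q + 1) (c * q + 1 + c)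

theorem parkOne_blockSpots {n c a b : ℕ} (hc : 0 < c) {S : Finset ℕ} (hbn : b < n) (hab : a ≤ b)
    (hbS : b ∉ S) (hS : ∀ q, a ≤ q → q < b → q ∈ S) :
    parkOne (n * c) (blockSpots c S) (c * a + 1) c = some (blockSpots c (insert b S)) := by
  have hmem {k : ℕ} : k ∈ blockSpots c S ↔ ∃ q ∈ S, c * q + 1 ≤ k ∧ k < c * q + 1 + c := by
    simp [blockSpots]
  refine parkOne_eq_some_iff.mpr ⟨c * b + 1, ⟨⟨?_, ?_, ?_⟩, ?_⟩, ?_⟩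
  · have := Nat.mul_le_mul_left c hab
    omega
  · have := Nat.mul_le_mul_left c hbn
    rw [Nat.mul_succ, mul_comm c n] at this
    omega
  · intro k hk hkS
    obtain ⟨q, hqS, hq₁, hq₂⟩ := hmem.mp hkS
    simp only [mem_Ico] at hk
    have hqb : q = b := by
      have h₁ : c * q < c * (b + 1) := by rw [mul_add]; omega
      have h₂ : c * b < c * (q + 1) := by rw [mul_add]; omega
      have := Nat.lt_of_mul_lt_mul_left h₁
      have := Nat.lt_of_mul_lt_mul_left h₂
      omega
    exact hbS (hqb ▸ hqS)
  · -- a start `j < c * b + 1` meets the block `q = (j - 1) / c ∈ S` in its last spot `c * q + c`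
    rintro j ⟨haj, -, hfree⟩
    by_contra! hjb
    have hq₁ : c * ((j - 1) / c) ≤ j - 1 := Nat.mul_div_le (j - 1) c
    have hq₂ : j - 1 < c * ((j - 1) / c + 1) := Nat.lt_mul_div_succ (j - 1) hc
    generalize (j - 1) / c = q at hq₁ hq₂
    rw [mul_add, mul_one] at hq₂
    have haq : a ≤ q := by
      by_contra! h
      have := Nat.mul_le_mul_left c (Nat.succ_le_of_lt h)
      rw [Nat.mul_succ] at this
      omega
    have hqb : q < b := Nat.lt_of_mul_lt_mul_left (a := c) (by omega)
    exact hfree (c * q + c) (by simp only [mem_Ico]; omega)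
      (hmem.mpr ⟨q, hS q haq hqb, by omega, by omega⟩)
  · rw [blockSpots, biUnion_insert, union_comm]
    rfl

def HallCondition (L : List ℕ) (F : Finset ℕ) : Prop :=
  ∀ t, L.countP (t ≤ ·) ≤ #{q ∈ F | t ≤ q}

theorem HallCondition.exists_erase {a : ℕ} {L : List ℕ} {F : Finset ℕ}
    (h : HallCondition (a :: L) F) :
    ∃ b ∈ F, a ≤ b ∧ (∀ q ∈ F, a ≤ q → b ≤ q) ∧ HallCondition L (F.erase b) := by
  have hcons : ∀ t ≤ a, (a :: L).countP (t ≤ ·) = L.countP (t ≤ ·) + 1 := fun t ht => by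
    simp [ht]
  have hne : {q ∈ F | a ≤ q}.Nonempty := card_pos.mp (by have := hcons a le_rfl ▸ h a; omega)
  obtain ⟨hbF, hab⟩ := mem_filter.mp (min'_mem _ hne)
  set b := min' _ hne
  have hmin : ∀ q ∈ F, a ≤ q → b ≤ q := fun q hq haq => min'_le _ _ (mem_filter.mpr ⟨hq, haq⟩)
  refine ⟨b, hbF, hab, hmin, fun t => ?_⟩
  have herase : {q ∈ F.erase b | t ≤ q} = {q ∈ F | t ≤ q}.erase b := filter_erase _ _ _
  rw [herase]
  by_cases htb : t ≤ b
  · have hlt : L.countP (t ≤ ·) + 1 ≤ #{q ∈ F | t ≤ q} := by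
      rcases le_or_gt t a with hta | hat
      · exact hcons t hta ▸ h t
      · -- every free spot `≥ a` is already `≥ b ≥ t`
        have hsub : {q ∈ F | a ≤ q} ⊆ {q ∈ F | t ≤ q} := fun q hq => by
          obtain ⟨hqF, haq⟩ := mem_filter.mp hq
          exact mem_filter.mpr ⟨hqF, htb.trans (hmin q hqF haq)⟩
        have hmono : L.countP (t ≤ ·) ≤ L.countP (a ≤ ·) :=
          List.countP_mono_left fun x _ hx => by simp only [decide_eq_true_eq] at hx ⊢; omega
        have := hcons a le_rfl ▸ h a
        have := card_le_card hsub
        omega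
    rw [card_erase_of_mem (s := {q ∈ F | t ≤ q}) (mem_filter.mpr ⟨hbF, htb⟩)]
    omega
  · rw [erase_eq_of_notMem fun hb => htb (mem_filter.mp hb).2]
    have := h t
    rwa [List.countP_cons, if_neg (by simp only [decide_eq_true_eq]; omega)] at this

theorem parkList_blockSpots_isSome {n c : ℕ} (hc : 0 < c) (L : List ℕ) {S : Finset ℕ}
    (hL : HallCondition L (range n \ S)) :
    (parkList (n * c) (L.map fun a => (c * a + 1, c)) (blockSpots c S)).isSome := by
  induction L generalizing S with
  | nil => rfl
  | cons a L ih =>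
    obtain ⟨b, hbF, hab, hmin, hL'⟩ := hL.exists_erase
    obtain ⟨hbn, hbS⟩ := mem_sdiff.mp hbF
    have hS : ∀ q, a ≤ q → q < b → q ∈ S := fun q haq hqb => by
      by_contra hqS
      have := hmin q (mem_sdiff.mpr ⟨mem_range.mpr (hqb.trans (mem_range.mp hbn)), hqS⟩) haq
      omega
    rw [← sdiff_insert] at hL'
    simpa [parkList, parkOne_blockSpots hc (mem_range.mp hbn) hab hbS hS] using ih hL'

def SortedParkingFn (n : ℕ) : Set (List ℕ) :=
  {b | b.length = n ∧ b.Pairwise (· ≤ ·) ∧ ∀ i (hi : i < b.length), b[i] ≤ i}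

theorem lt_of_mem_sortedParkingFn {n : ℕ} {b : List ℕ} (hb : b ∈ SortedParkingFn n) {e : ℕ}
    (he : e ∈ b) : e < n := by
  obtain ⟨i, hi, rfl⟩ := List.getElem_of_mem he
  exact (hb.2.2 i hi).trans_lt (hb.1 ▸ hi)

theorem hallCondition_of_mem_sortedParkingFn {n : ℕ} {b : List ℕ}
    (hb : b ∈ SortedParkingFn n) : HallCondition b (range n) := by
  intro t
  have hfree : #{q ∈ range n | t ≤ q} = n - t := by
    rw [show {q ∈ range n | t ≤ q} = Ico t n by ext; simp [and_comm]]
    exact Nat.card_Ico t n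
  have htake : (b.take t).countP (t ≤ ·) = 0 := List.countP_eq_zero.mpr fun e he => by
    obtain ⟨i, hi, rfl⟩ := List.getElem_of_mem he
    simp only [List.getElem_take, List.length_take, decide_eq_true_eq, not_le] at hi ⊢
    exact (hb.2.2 i (by omega)).trans_lt (by omega)
  rw [hfree, ← List.take_append_drop t b, List.countP_append, htake, zero_add]
  exact List.countP_le_length.trans (by simp [hb.1])

theorem map_mem_PAinv {n c : ℕ} (hc : 0 < c) {b : List ℕ} (hb : b ∈ SortedParkingFn n) :
    b.map (c * · + 1) ∈ PAinv (List.replicate n c) := by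
  intro x hx
  rw [← congrFun₂ (List.eq_map_comp_perm (c * · + 1)) x b] at hx
  obtain ⟨b', rfl, hb'⟩ := hx
  refine isPA_replicate_iff.mpr ⟨by simp [hb'.length_eq, hb.1], fun e he => ?_, ?_⟩
  · obtain ⟨a, ha, rfl⟩ := List.mem_map.mp he
    have := Nat.mul_le_mul_left c (lt_of_mem_sortedParkingFn hb (hb'.mem_iff.mp ha))
    rw [Nat.mul_succ, mul_comm c n] at this
    exact ⟨by omega, by omega⟩
  · have hhall : HallCondition b' (range n \ ∅) := fun t => by
      rw [hb'.countP_eq, sdiff_empty]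
      exact hallCondition_of_mem_sortedParkingFn hb t
    simpa [blockSpots, List.map_map, Function.comp_def] using parkList_blockSpots_isSome hc b' hhall

theorem setOf_sorted_mem_PAinv_replicate {n c : ℕ} (hc : 0 < c) :
    {x | x ∈ PAinv (List.replicate n c) ∧ x.Pairwise (· ≤ ·)} =
      List.map (c * · + 1) '' SortedParkingFn n := by
  ext x
  constructor
  · rintro ⟨hx, hs⟩
    obtain ⟨hlen, hrange, -⟩ := isPA_replicate_iff.mp (hx x (List.Perm.refl x))
    have hcancel : ∀ e ∈ x, c * ((e - 1) / c) + 1 = e := fun e he => by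
      rw [Nat.mul_div_cancel' (dvd_sub_one_of_mem_PAinv hx he)]
      have := (hrange e he).1
      omega
    refine ⟨x.map fun e => (e - 1) / c, ⟨by simp [hlen], ?_, fun i hi => ?_⟩, ?_⟩
    · exact hs.map _ fun a b hab => Nat.div_le_div_right (Nat.sub_le_sub_right hab 1)
    · simp only [List.getElem_map]
      have := getElem_le_of_mem_PAinv hx hs i (by simpa using hi)
      exact Nat.div_le_of_le_mul (by omega)
    · rw [List.map_map]
      exact (List.map_congr_left hcancel).trans (List.map_id' x)
  · rintro ⟨b, hb, rfl⟩
    exact ⟨map_mem_PAinv hc hb, hb.2.1.map _ fun a b hab => by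
      have := Nat.mul_le_mul_left c hab
      omega⟩

end ParkingProcess

section DyckWords

open List DyckStep

/-- `downCounts k w` lists, for each up-step of `w`, `k` plus the number of down-steps before it. -/
def downCounts : ℕ → List DyckStep → List ℕ
  | _, [] => []
  | k, D :: w => downCounts (k + 1) w
  | k, U :: w => k :: downCounts k w

def ofDownCounts (n : ℕ) : ℕ → List ℕ → List DyckStep
  | k, [] => replicate (n - k) D
  | k, a :: b => replicate (a - k) D ++ U :: ofDownCounts n a b

theorem length_downCounts (k : ℕ) (w : List DyckStep) :
    (downCounts k w).length = w.count U := by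
  induction w generalizing k with
  | nil => rfl
  | cons s w ih => cases s <;> simp [downCounts, ih]

theorem le_of_mem_downCounts {k e : ℕ} {w : List DyckStep} (he : e ∈ downCounts k w) :
    k ≤ e := by
  induction w generalizing k with
  | nil => simp [downCounts] at he
  | cons s w ih =>
    cases s with
    | U => rcases mem_cons.mp he with rfl | he <;> [rfl; exact ih he]
    | D => exact (Nat.le_succ k).trans (ih he)

theorem pairwise_downCounts (k : ℕ) (w : List DyckStep) :
    (downCounts k w).Pairwise (· ≤ ·) := by
  induction w generalizing k with
  | nil => exact .nil
  | cons s w ih =>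
    cases s with
    | U => exact pairwise_cons.mpr ⟨fun _ => le_of_mem_downCounts, ih k⟩
    | D => exact ih (k + 1)

theorem downCounts_replicate_append (k d : ℕ) (w : List DyckStep) :
    downCounts k (replicate d D ++ w) = downCounts (k + d) w := by
  induction d generalizing k with
  | zero => rfl
  | succ d ih => rw [replicate_succ, cons_append, downCounts, ih]; ring_nf

theorem downCounts_ofDownCounts (n : ℕ) {k : ℕ} {b : List ℕ} (hb : b.Pairwise (· ≤ ·))
    (hk : ∀ e ∈ b, k ≤ e) : downCounts k (ofDownCounts n k b) = b := by
  induction b generalizing k with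
  | nil => rw [ofDownCounts, ← append_nil (replicate _ D), downCounts_replicate_append]; rfl
  | cons a b ih =>
    obtain ⟨ha, hb⟩ := pairwise_cons.mp hb
    rw [ofDownCounts, downCounts_replicate_append, Nat.add_sub_cancel' (hk a mem_cons_self),
      downCounts, ih hb ha]

theorem ofDownCounts_eq_D_cons {n k : ℕ} {b : List ℕ} (hk : ∀ e ∈ b, k < e) (hn : k < n) :
    ofDownCounts n k b = D :: ofDownCounts n (k + 1) b := by
  cases b with
  | nil => rw [ofDownCounts, ofDownCounts, ← replicate_succ]; congr 1; omega
  | cons a b =>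
    have := hk a mem_cons_self
    rw [ofDownCounts, ofDownCounts, ← cons_append, ← replicate_succ]; congr 2; omega

theorem ofDownCounts_downCounts {n k : ℕ} {w : List DyckStep} (hw : w.count D + k = n) :
    ofDownCounts n k (downCounts k w) = w := by
  induction w generalizing k with
  | nil => simp [downCounts, ofDownCounts, ← hw]
  | cons s w ih =>
    cases s with
    | U => simp only [downCounts, ofDownCounts, Nat.sub_self, replicate_zero, nil_append,
        ih (by simpa using hw)]
    | D =>
      have hw' : w.count D + (k + 1) = n := by rw [count_cons_self] at hw; omega
      rw [downCounts, ofDownCounts_eq_D_cons (fun e he => le_of_mem_downCounts he) (by omega),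
        ih hw']

theorem count_U_ofDownCounts (n k : ℕ) (b : List ℕ) : (ofDownCounts n k b).count U = b.length := by
  induction b generalizing k with
  | nil => simp [ofDownCounts, count_replicate]
  | cons a b ih => simp [ofDownCounts, ih, count_replicate]

theorem count_D_ofDownCounts {n k : ℕ} {b : List ℕ} (hb : b.Pairwise (· ≤ ·))
    (hk : ∀ e ∈ b, k ≤ e ∧ e ≤ n) (hkn : k ≤ n) : (ofDownCounts n k b).count D = n - k := by
  induction b generalizing k with
  | nil => simp [ofDownCounts]
  | cons a b ih =>
    obtain ⟨ha, hb⟩ := pairwise_cons.mp hb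
    have hka := hk a mem_cons_self
    rw [ofDownCounts, count_append, count_replicate_self, count_cons_of_ne (by decide),
      ih hb (fun e he => ⟨ha e he, (hk e (mem_cons_of_mem _ he)).2⟩) hka.2]
    omega

theorem forall_take_cons_iff {α : Type*} (P : List α → Prop) (s : α) (w : List α) :
    (∀ j, P ((s :: w).take j)) ↔ P [] ∧ ∀ j, P (s :: w.take j) :=
  ⟨fun h => ⟨h 0, fun j => h (j + 1)⟩, fun ⟨h0, h⟩ j => by cases j; exacts [h0, h _]⟩

/-- The Dyck prefix condition on `w` is the bound `b[i] ≤ i` on `b = downCounts 0 w`; the offsets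
`k` and `i₀` make the statement inductive. -/
theorem forall_count_D_take_le_iff (w : List DyckStep) (k i₀ : ℕ) :
    (∀ j, (w.take j).count D + k ≤ (w.take j).count U + i₀) ↔
      (∀ i (hi : i < (downCounts k w).length), (downCounts k w)[i] ≤ i + i₀) ∧
        w.count D + k ≤ w.count U + i₀ := by
  induction w generalizing k i₀ with
  | nil => simp [downCounts]
  | cons s w ih =>
    rw [forall_take_cons_iff (fun p => p.count D + k ≤ p.count U + i₀)]
    cases s with
    | D =>
      simp only [downCounts, count_cons_self, count_cons_of_ne (show D ≠ U by decide), count_nil]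
      refine Iff.trans ?_ ((ih (k + 1) i₀).trans (and_congr_right' (by omega)))
      refine ⟨fun h j => by have := h.2 j; omega, fun h => ⟨?_, fun j => by have := h j; omega⟩⟩
      have := h 0
      simp only [take_zero, count_nil] at this
      omega
    | U =>
      simp only [downCounts, count_cons_self, count_cons_of_ne (show U ≠ D by decide),
        count_nil, length_cons, Nat.forall_lt_succ_left', getElem_cons_zero, getElem_cons_succ]
      have := ih k (i₀ + 1)
      constructor
      · rintro ⟨h0, h⟩
        obtain ⟨hb, hw⟩ := this.mp fun j => by have := h j; omega
        exact ⟨⟨by omega, fun m hm => by have := hb m hm; omega⟩, by omega⟩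
      · rintro ⟨⟨h0, hb⟩, hw⟩
        refine ⟨by omega, fun j => ?_⟩
        have := this.mpr ⟨fun m hm => by have := hb m hm; omega, by omega⟩ j
        omega

theorem downCounts_mem_sortedParkingFn {p : DyckWord} {n : ℕ} (hp : p.semilength = n) :
    downCounts 0 p ∈ SortedParkingFn n := by
  refine ⟨(length_downCounts 0 _).trans hp, pairwise_downCounts 0 _, fun i hi => ?_⟩
  simpa using ((forall_count_D_take_le_iff p.toList 0 0).mp
    fun j => by simpa using p.count_D_le_count_U j).1 i hi

section OfDownCounts

variable {n : ℕ} {b : List ℕ} (hb : b ∈ SortedParkingFn n)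
include hb

theorem count_U_ofDownCounts_of_mem : (ofDownCounts n 0 b).count U = n :=
  (count_U_ofDownCounts n 0 b).trans hb.1

theorem count_D_ofDownCounts_of_mem : (ofDownCounts n 0 b).count D = n :=
  count_D_ofDownCounts hb.2.1
    (fun e he => ⟨Nat.zero_le e, (lt_of_mem_sortedParkingFn hb he).le⟩) n.zero_le

theorem count_D_take_ofDownCounts_le (j : ℕ) :
    ((ofDownCounts n 0 b).take j).count D ≤ ((ofDownCounts n 0 b).take j).count U := by
  have hdown := downCounts_ofDownCounts n hb.2.1 fun _ _ => Nat.zero_le _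
  have := count_U_ofDownCounts_of_mem hb
  have := count_D_ofDownCounts_of_mem hb
  simpa using (forall_count_D_take_le_iff (ofDownCounts n 0 b) 0 0).mpr
    ⟨by rw [hdown]; exact hb.2.2, by omega⟩ j

end OfDownCounts

def sortedParkingFnEquivDyckWord (n : ℕ) :
    SortedParkingFn n ≃ {p : DyckWord // p.semilength = n} where
  toFun b := ⟨⟨ofDownCounts n 0 b,
      (count_U_ofDownCounts_of_mem b.2).trans (count_D_ofDownCounts_of_mem b.2).symm,
      count_D_take_ofDownCounts_le b.2⟩, count_U_ofDownCounts_of_mem b.2⟩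
  invFun p := ⟨downCounts 0 p.1, downCounts_mem_sortedParkingFn p.2⟩
  left_inv b := Subtype.ext (downCounts_ofDownCounts n b.2.2.1 fun _ _ => Nat.zero_le _)
  right_inv p := Subtype.ext <| DyckWord.ext <| ofDownCounts_downCounts <| by
    rw [← p.1.count_U_eq_count_D]; exact p.2

theorem ncard_sortedParkingFn (n : ℕ) : (SortedParkingFn n).ncard = catalan n := by
  rw [← Nat.card_coe_set_eq, Nat.card_congr (sortedParkingFnEquivDyckWord n),
    Nat.card_eq_fintype_card, DyckWord.card_dyckWord_semilength_eq_catalan]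

end DyckWords

theorem stmt5_general (c n : ℕ) (hc : 0 < c) :
    {x | x ∈ PAinv (List.replicate n c) ∧ x.Pairwise (· ≤ ·)}.ncard = catalan n := by
  have hinj : Function.Injective (List.map (c * · + 1)) :=
    List.map_injective_iff.mpr fun a b h => by simpa [hc.ne'] using h
  rw [setOf_sorted_mem_PAinv_replicate hc, Set.ncard_image_of_injective _ hinj,
    ncard_sortedParkingFn]

theorem stmt5 (c n : ℕ) (hc : 0 < c) (hn : 0 < n) :
    {x | x ∈ PAinv (List.replicate n c) ∧ x.Pairwise (· ≤ ·)}.ncard = catalan n :=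
  stmt5_general c n hc
end

section
/- Let y = (y_1,…,y_n) be a strictly increasing list of n positive integers (y_1 < y_2 < ⋯ < y_n). Then PA^inv_n(y) = {(1,1,…,1)}, i.e., y is minimally invariant. -/
/-!
Suppose an invariant assortment `x` is not all ones, and let `c ≥ 2` be its least entry
other than `1`. The lengths sum to the length of the street, so a successful run fills every
spot. Order `x` as `(c, 1, …, 1, rest)`: the first car takes `[c, c + y₁)`, the cars preferring
`1` then fill `[1, c)` from the left, and the remaining cars prefer spots `≥ c`. Since the
lengths increase, once a car preferring `1` overshoots the gap before `c`, so do all later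
ones, and the gap stays open. Hence `1 + y₂ + ⋯ + y_{k+1} = c` for some `k`. Ordering `x` as
`(1, c, 1, …, 1, rest)` gives in the same way `1 + y₁ + y₃ + ⋯ + y_{j+2} = c`, and these two
sums cannot agree since `y₁ < y₂ < y₃ < ⋯`.
-/

lemma zip_replicate_append {α β : Type*} (a : α) (t : ℕ) (B : List α) (A : List β) :
    (List.replicate t a ++ B).zip A = (A.take t).map ((a, ·)) ++ B.zip (A.drop t) := by
  induction t generalizing A with
  | zero => simp
  | succ t ih =>
    cases A with
    | nil => simp
    | cons b A => simp [List.replicate_succ, ih]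

lemma add_sum_take_ne_add_sum_take {a b : ℕ} {A : List ℕ} (hab : a < b) (hA : ∀ x ∈ A, b < x)
    (i j : ℕ) : a + (A.take j).sum ≠ b + (A.take i).sum := by
  rcases le_or_gt j i with hji | hij
  · have : (A.take j).sum ≤ (A.take i).sum := A.monotone_sum_take hji
    omega
  rcases lt_or_ge i A.length with hi | hi
  · have hsucc := A.sum_take_succ i hi
    have hAi := hA _ (List.getElem_mem hi)
    have : (A.take (i + 1)).sum ≤ (A.take j).sum := A.monotone_sum_take hij
    omega
  · rw [List.take_of_length_le hi, List.take_of_length_le (by omega)]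
    omega

def IsFirstGap (occ : Finset ℕ) (p c : ℕ) : Prop :=
  Finset.Ico 1 p ⊆ occ ∧ (∀ k ∈ Finset.Ico p c, k ∉ occ) ∧ c ∈ occ

lemma IsFirstGap.union_Ico {occ : Finset ℕ} {p c : ℕ} (h : IsFirstGap occ p c) (l : ℕ) :
    IsFirstGap (occ ∪ Finset.Ico p (p + l)) (p + l) c := by
  obtain ⟨hfilled, hfree, hc⟩ := h
  refine ⟨fun k hk => ?_, fun k hk hk' => ?_, Finset.mem_union_left _ hc⟩
  · rw [Finset.mem_Ico] at hk
    rw [Finset.mem_union, Finset.mem_Ico]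
    by_cases hkp : k < p
    · exact Or.inl (hfilled (Finset.mem_Ico.2 ⟨hk.1, hkp⟩))
    · exact Or.inr ⟨by omega, hk.2⟩
  · rw [Finset.mem_Ico] at hk
    rcases Finset.mem_union.1 hk' with hk' | hk'
    · exact hfree k (Finset.mem_Ico.2 ⟨by omega, hk.2⟩) hk'
    · rw [Finset.mem_Ico] at hk'
      omega

section Parking

variable {m : ℕ}

lemma parkOne_eq_some {occ : Finset ℕ} {p l j : ℕ} (hpj : p ≤ j) (hjm : j + l ≤ m + 1)
    (hfree : ∀ k ∈ Finset.Ico j (j + l), k ∉ occ)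
    (hblocked : ∀ i < j, p ≤ i → i + l ≤ m + 1 → ∃ k ∈ Finset.Ico i (i + l), k ∈ occ) :
    parkOne m occ p l = some (occ ∪ Finset.Ico j (j + l)) := by
  have hex : ∃ j, p ≤ j ∧ j + l ≤ m + 1 ∧ ∀ k ∈ Finset.Ico j (j + l), k ∉ occ :=
    ⟨j, hpj, hjm, hfree⟩
  have hfind : Nat.find hex = j := by
    refine (Nat.find_eq_iff hex).2 ⟨⟨hpj, hjm, hfree⟩, fun i hi ⟨hpi, him, hifree⟩ => ?_⟩
    obtain ⟨k, hk, hkocc⟩ := hblocked i hi hpi him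
    exact hifree k hk hkocc
  rw [parkOne, dif_pos hex, hfind]

lemma exists_of_parkOne_eq_some {occ occ' : Finset ℕ} {p l : ℕ}
    (h : parkOne m occ p l = some occ') :
    ∃ j, p ≤ j ∧ j + l ≤ m + 1 ∧ (∀ k ∈ Finset.Ico j (j + l), k ∉ occ) ∧
      occ' = occ ∪ Finset.Ico j (j + l) := by
  unfold parkOne at h
  split at h
  case isTrue hex =>
    obtain ⟨hpj, hjm, hfree⟩ := Nat.find_spec hex
    exact ⟨Nat.find hex, hpj, hjm, hfree, (Option.some_inj.mp h).symm⟩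
  case isFalse => cases h

lemma exists_of_parkList_cons_eq_some {car : ℕ × ℕ} {rest : List (ℕ × ℕ)} {occ F : Finset ℕ}
    (h : parkList m (car :: rest) occ = some F) :
    ∃ j, car.1 ≤ j ∧ j + car.2 ≤ m + 1 ∧ (∀ k ∈ Finset.Ico j (j + car.2), k ∉ occ) ∧
      parkList m rest (occ ∪ Finset.Ico j (j + car.2)) = some F := by
  obtain ⟨occ', hpark, hrest⟩ := Option.bind_eq_some_iff.mp h
  obtain ⟨j, hpj, hjm, hfree, rfl⟩ := exists_of_parkOne_eq_some hpark
  exact ⟨j, hpj, hjm, hfree, hrest⟩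

lemma parkList_cons_of_parkOne_eq_some {p l : ℕ} {rest : List (ℕ × ℕ)} {occ occ' : Finset ℕ}
    (h : parkOne m occ p l = some occ') :
    parkList m ((p, l) :: rest) occ = parkList m rest occ' := by
  simp only [parkList, h, Option.bind_some]

lemma parkList_union_Ico_of_parkList_cons {p l : ℕ} {rest : List (ℕ × ℕ)} {occ F : Finset ℕ}
    (h : parkList m ((p, l) :: rest) occ = some F)
    (hfree : ∀ k ∈ Finset.Ico p (p + l), k ∉ occ) :
    parkList m rest (occ ∪ Finset.Ico p (p + l)) = some F := by
  obtain ⟨j, hpj, hjm, -, -⟩ := exists_of_parkList_cons_eq_some h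
  have hpark : parkOne m occ p l = some (occ ∪ Finset.Ico p (p + l)) :=
    parkOne_eq_some le_rfl (by dsimp only at hpj hjm; omega) hfree
      fun i hi hpi _ => absurd hpi (by omega)
  rwa [parkList_cons_of_parkOne_eq_some hpark] at h

lemma parkOne_one_eq_some {occ : Finset ℕ} {p l : ℕ} (hp : 1 ≤ p) (hl : 1 ≤ l)
    (hpl : p + l ≤ m + 1) (hfilled : Finset.Ico 1 p ⊆ occ)
    (hfree : ∀ k ∈ Finset.Ico p (p + l), k ∉ occ) :
    parkOne m occ 1 l = some (occ ∪ Finset.Ico p (p + l)) :=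
  parkOne_eq_some hp hpl hfree fun i hip h1i _ =>
    ⟨i, Finset.mem_Ico.2 ⟨le_rfl, by omega⟩, hfilled (Finset.mem_Ico.2 ⟨h1i, hip⟩)⟩

lemma parkList_map_one {ys : List ℕ} (hys : ∀ l ∈ ys, 1 ≤ l) {p : ℕ} (hp : 1 ≤ p)
    (hm : p + ys.sum ≤ m + 1) :
    parkList m (ys.map ((1, ·))) (Finset.Ico 1 p) = some (Finset.Ico 1 (p + ys.sum)) := by
  induction ys generalizing p with
  | nil => rfl
  | cons l ys ih =>
    have hl : 1 ≤ l := hys l List.mem_cons_self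
    rw [List.sum_cons] at hm
    have hpark : parkOne m (Finset.Ico 1 p) 1 l = some (Finset.Ico 1 (p + l)) := by
      rw [parkOne_one_eq_some hp hl (by omega) subset_rfl
        (fun k hk hk' => by simp only [Finset.mem_Ico] at hk hk'; omega),
        Finset.Ico_union_Ico_eq_Ico hp (by omega)]
    rw [List.map_cons, parkList_cons_of_parkOne_eq_some hpark,
      ih (fun a ha => hys a (List.mem_cons_of_mem _ ha)) (by omega) (by omega),
      List.sum_cons, add_assoc]

lemma subset_of_parkList_eq_some :
    ∀ {cars : List (ℕ × ℕ)} {occ F : Finset ℕ}, parkList m cars occ = some F →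
      (∀ car ∈ cars, 1 ≤ car.1) → F ⊆ occ ∪ Finset.Ico 1 (m + 1)
  | [], _, _, h, _ => by cases h; exact Finset.subset_union_left
  | car :: rest, occ, F, h, hpref => by
    obtain ⟨j, hpj, hjm, -, hrest⟩ := exists_of_parkList_cons_eq_some h
    have h1 := hpref car List.mem_cons_self
    refine (subset_of_parkList_eq_some hrest
      fun c hc => hpref c (List.mem_cons_of_mem _ hc)).trans fun z hz => ?_
    simp only [Finset.mem_union, Finset.mem_Ico] at hz ⊢
    rcases hz with (hz | hz) | hz
    · exact Or.inl hz
    · exact Or.inr (by omega)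
    · exact Or.inr hz

lemma card_of_parkList_eq_some :
    ∀ {cars : List (ℕ × ℕ)} {occ F : Finset ℕ}, parkList m cars occ = some F →
      F.card = occ.card + (cars.map Prod.snd).sum
  | [], _, _, h => by cases h; simp
  | car :: rest, occ, F, h => by
    obtain ⟨j, -, -, hfree, hrest⟩ := exists_of_parkList_cons_eq_some h
    rw [card_of_parkList_eq_some hrest,
      Finset.card_union_of_disjoint (Finset.disjoint_right.2 hfree), Nat.card_Ico,
      List.map_cons, List.sum_cons]
    omega

/-- A car can cover the free spot `p` only by parking at `p` itself, since spots before `p`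
are taken; it cannot do so if it prefers a spot `≥ c`, or if it is long enough to reach the
occupied spot `c`. -/
lemma notMem_of_parkList_eq_some {c p : ℕ} (hpc : p < c) :
    ∀ {cars : List (ℕ × ℕ)} {occ F : Finset ℕ}, parkList m cars occ = some F →
      (∀ car ∈ cars, 1 ≤ car.1 ∧ (c ≤ car.1 ∨ c < p + car.2)) →
      Finset.Ico 1 p ⊆ occ → p ∉ occ → c ∈ occ → p ∉ F
  | [], _, _, h, _, _, hp, _ => by cases h; exact hp
  | car :: rest, occ, F, h, hcars, hfilled, hp, hc => by
    obtain ⟨j, hpj, -, hfree, hrest⟩ := exists_of_parkList_cons_eq_some h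
    obtain ⟨h1, hcar⟩ := hcars car List.mem_cons_self
    have hpnew : p ∉ Finset.Ico j (j + car.2) := by
      intro hmem
      rw [Finset.mem_Ico] at hmem
      rcases Nat.lt_or_ge j p with hjp | hjp
      · exact hfree j (Finset.mem_Ico.2 ⟨le_rfl, by omega⟩)
          (hfilled (Finset.mem_Ico.2 ⟨by omega, hjp⟩))
      · rcases hcar with hcar | hcar
        · omega
        · exact hfree c (Finset.mem_Ico.2 ⟨by omega, by omega⟩) hc
    refine notMem_of_parkList_eq_some hpc hrest
      (fun d hd => hcars d (List.mem_cons_of_mem _ hd))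
      (hfilled.trans Finset.subset_union_left) ?_ (Finset.mem_union_left _ hc)
    rw [Finset.mem_union]
    exact fun hmem => hmem.elim hp hpnew

lemma exists_add_sum_take_eq_of_parkList_eq_some {c : ℕ} (hcm : c ≤ m) {big : List (ℕ × ℕ)}
    (hbig : ∀ car ∈ big, c ≤ car.1) {L : List ℕ} (hL : ∀ l ∈ L, 1 ≤ l)
    (hLmono : L.Pairwise (· ≤ ·)) {p : ℕ} {occ F : Finset ℕ}
    (h : parkList m (L.map ((1, ·)) ++ big) occ = some F) (hp : 1 ≤ p) (hpc : p ≤ c)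
    (hgap : IsFirstGap occ p c) (hF : Finset.Ico p c ⊆ F) :
    ∃ k, p + (L.take k).sum = c := by
  have hc : 1 ≤ c := hp.trans hpc
  induction L generalizing p occ with
  | nil =>
    rcases hpc.eq_or_lt with rfl | hpc
    · exact ⟨0, rfl⟩
    refine absurd (hF (Finset.left_mem_Ico.2 hpc))
      (notMem_of_parkList_eq_some hpc (by simpa using h)
        (fun car hcar => ⟨hc.trans (hbig car hcar), Or.inl (hbig car hcar)⟩) hgap.1
        (hgap.2.1 p (Finset.left_mem_Ico.2 hpc)) hgap.2.2)
  | cons l L ih =>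
    have hl : 1 ≤ l := hL l List.mem_cons_self
    by_cases hfit : p + l ≤ c
    · have hpark := parkOne_one_eq_some (m := m) hp hl (by omega) hgap.1
        fun k hk => hgap.2.1 k (Finset.Ico_subset_Ico_right hfit hk)
      rw [List.map_cons, List.cons_append, parkList_cons_of_parkOne_eq_some hpark] at h
      obtain ⟨k, hk⟩ := ih (fun a ha => hL a (List.mem_cons_of_mem _ ha)) hLmono.of_cons h
        (by omega) hfit (hgap.union_Ico l) ((Finset.Ico_subset_Ico_left (by omega)).trans hF)
      exact ⟨k + 1, by rw [List.take_succ_cons, List.sum_cons]; omega⟩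
    rcases hpc.eq_or_lt with rfl | hpc
    · exact ⟨0, rfl⟩
    -- the lengths increase, so no car preferring `1` fits into the gap `[p, c)`
    have hlong : ∀ l' ∈ l :: L, c < p + l' := by
      intro l' hl'
      rcases List.mem_cons.1 hl' with rfl | hl'
      · omega
      · have := List.rel_of_pairwise_cons hLmono hl'
        omega
    refine absurd (hF (Finset.left_mem_Ico.2 hpc)) (notMem_of_parkList_eq_some hpc h
      (fun car hcar => ?_) hgap.1 (hgap.2.1 p (Finset.left_mem_Ico.2 hpc)) hgap.2.2)
    rcases List.mem_append.1 hcar with hcar | hcar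
    · obtain ⟨l', hl', rfl⟩ := List.mem_map.1 hcar
      exact ⟨le_rfl, Or.inr (hlong l' hl')⟩
    · exact ⟨hc.trans (hbig car hcar), Or.inl (hbig car hcar)⟩

end Parking

lemma IsPA.parkList_eq_Ico {y x : List ℕ} (hx : IsPA y x) :
    parkList y.sum (x.zip y) ∅ = some (Finset.Ico 1 (y.sum + 1)) := by
  obtain ⟨hlen, hpref, hsome⟩ := hx
  obtain ⟨F, hF⟩ := Option.isSome_iff_exists.mp hsome
  have hprefs : ∀ car ∈ x.zip y, 1 ≤ car.1 := fun car hcar => (hpref _ (List.of_mem_zip hcar).1).1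
  have hcard := card_of_parkList_eq_some hF
  rw [List.map_snd_zip hlen.ge, Finset.card_empty, zero_add] at hcard
  rw [hF, Finset.eq_of_subset_of_card_le (by simpa using subset_of_parkList_eq_some hF hprefs)
    (by rw [hcard, Nat.card_Ico, Nat.add_sub_cancel] : (Finset.Ico 1 (y.sum + 1)).card ≤ F.card)]

lemma exists_sum_take_eq_of_isPA_cons {y₁ c t : ℕ} {A B : List ℕ}
    (hy : ∀ a ∈ y₁ :: A, 0 < a) (hA : A.Pairwise (· < ·)) (hB : ∀ b ∈ B, c ≤ b)
    (h : IsPA (y₁ :: A) (c :: (List.replicate t 1 ++ B))) :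
    ∃ k ≤ t, 1 + (A.take k).sum = c := by
  have hc := h.2.1 c List.mem_cons_self
  have hy₁ := hy y₁ List.mem_cons_self
  have hfull := h.parkList_eq_Ico
  rw [List.zip_cons_cons] at hfull
  have hrest := parkList_union_Ico_of_parkList_cons hfull (by simp)
  rw [zip_replicate_append] at hrest
  obtain ⟨k, hk⟩ := exists_add_sum_take_eq_of_parkList_eq_some hc.2
    (fun car hcar => hB _ (List.of_mem_zip hcar).1)
    (fun a ha => hy a (List.mem_cons_of_mem _ (List.take_subset _ _ ha)))
    ((hA.sublist (List.take_sublist _ _)).imp le_of_lt) hrest le_rfl hc.1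
    ⟨by simp, fun k hk => by simp only [Finset.mem_Ico] at hk; simp; omega, by simp; omega⟩
    (Finset.Ico_subset_Ico_right (by omega))
  exact ⟨min k t, min_le_right k t, by rwa [List.take_take] at hk⟩

lemma exists_sum_take_eq_of_isPA_one_cons {y₁ y₂ c t : ℕ} {A B : List ℕ}
    (hy : ∀ a ∈ y₁ :: y₂ :: A, 0 < a) (hA : A.Pairwise (· < ·)) (hB : ∀ b ∈ B, c ≤ b)
    (hy₁c : y₁ < c) (h : IsPA (y₁ :: y₂ :: A) (1 :: c :: (List.replicate t 1 ++ B))) :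
    ∃ k, 1 + y₁ + (A.take k).sum = c := by
  have hc := h.2.1 c (List.mem_cons_of_mem _ List.mem_cons_self)
  have hy₂ := hy y₂ (List.mem_cons_of_mem _ List.mem_cons_self)
  have hfull := h.parkList_eq_Ico
  rw [List.zip_cons_cons, List.zip_cons_cons] at hfull
  have hrest := parkList_union_Ico_of_parkList_cons
    (parkList_union_Ico_of_parkList_cons hfull (by simp))
    (fun k hk => by simp only [Finset.mem_Ico] at hk; simp; omega)
  rw [zip_replicate_append] at hrest
  obtain ⟨k, hk⟩ := exists_add_sum_take_eq_of_parkList_eq_some hc.2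
    (fun car hcar => hB _ (List.of_mem_zip hcar).1)
    (fun a ha => hy a (by simp [List.mem_of_mem_take ha]))
    ((hA.sublist (List.take_sublist _ _)).imp le_of_lt) hrest (p := 1 + y₁) (by omega) (by omega)
    ⟨fun k hk => by simp only [Finset.mem_Ico] at hk; simp; omega,
      fun k hk => by simp only [Finset.mem_Ico] at hk; simp; omega, by simp; omega⟩
    (Finset.Ico_subset_Ico (by omega) (by omega))
  exact ⟨min k t, by rwa [List.take_take] at hk⟩

lemma exists_perm_cons_replicate_append {x : List ℕ} (hx : ∀ a ∈ x, 1 ≤ a)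
    (hne : x ≠ List.replicate x.length 1) :
    ∃ c t B, 2 ≤ c ∧ (∀ b ∈ B, c ≤ b) ∧ (c :: (List.replicate t 1 ++ B)).Perm x := by
  have hex : ∃ c, c ∈ x ∧ 2 ≤ c := by
    by_contra! hall
    refine hne (List.eq_replicate_iff.2 ⟨rfl, fun b hb => ?_⟩)
    have := hx b hb
    have := hall b hb
    omega
  obtain ⟨hcx, hc⟩ := Nat.find_spec hex
  refine ⟨Nat.find hex, (x.erase (Nat.find hex)).count 1,
    (x.erase (Nat.find hex)).filter (fun b => !decide (b = 1)), hc, fun b hb => ?_, ?_⟩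
  · simp only [List.mem_filter, Bool.not_eq_eq_eq_not, Bool.not_true, decide_eq_false_iff_not] at hb
    have hbx := List.mem_of_mem_erase hb.1
    exact Nat.find_min' hex ⟨hbx, by have := hx b hbx; omega⟩
  · rw [← List.filter_eq]
    exact ((List.filter_append_perm _ _).cons _).trans (List.perm_cons_erase hcx).symm

lemma isPA_replicate_one {y : List ℕ} (hy : ∀ a ∈ y, 0 < a) :
    IsPA y (List.replicate y.length 1) := by
  refine ⟨List.length_replicate, fun a ha => ?_, ?_⟩
  · obtain rfl := List.eq_of_mem_replicate ha
    obtain ⟨b, hb⟩ := List.exists_mem_of_ne_nil y (by rintro rfl; simp at ha)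
    exact ⟨le_rfl, (hy b hb).trans_le (List.le_sum_of_mem hb)⟩
  · have hzip : (List.replicate y.length 1).zip y = y.map ((1, ·)) := by
      simpa using zip_replicate_append 1 y.length [] y
    rw [hzip, ← Finset.Ico_self 1,
      parkList_map_one hy le_rfl (Nat.add_comm _ _).le]
    rfl

theorem stmt12_general (y : List ℕ) (hy : ∀ a ∈ y, 0 < a)
    (hinc : y.Chain' (· < ·)) :
    PAinv y = {List.replicate y.length 1} := by
  have hpw : y.Pairwise (· < ·) := List.isChain_iff_pairwise.mp hinc
  ext x
  refine ⟨fun hx => ?_, ?_⟩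
  · obtain ⟨hlen, hpref, -⟩ := hx x (List.Perm.refl x)
    by_contra hne
    obtain ⟨c, t, B, hc, hB, hperm⟩ :=
      exists_perm_cons_replicate_append (fun a ha => (hpref a ha).1) (hlen ▸ hne)
    have hfirst := hx _ hperm
    obtain ⟨y₁, A, rfl⟩ : ∃ y₁ A, y = y₁ :: A :=
      List.exists_cons_of_length_pos (by rw [← hfirst.1]; exact Nat.succ_pos _)
    obtain ⟨k, hkt, hk⟩ := exists_sum_take_eq_of_isPA_cons hy hpw.of_cons hB hfirst
    obtain ⟨y₂, A₂, rfl⟩ : ∃ y₂ A₂, A = y₂ :: A₂ :=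
      List.exists_cons_of_ne_nil (by rintro rfl; simp at hk; omega)
    obtain ⟨k, rfl⟩ : ∃ k', k = k' + 1 :=
      Nat.exists_eq_add_one.2 (Nat.pos_of_ne_zero (by rintro rfl; simp at hk; omega))
    obtain ⟨t, rfl⟩ : ∃ t', t = t' + 1 := Nat.exists_eq_add_one.2 (by omega)
    rw [List.take_succ_cons, List.sum_cons] at hk
    have hy₁₂ : y₁ < y₂ := List.rel_of_pairwise_cons hpw List.mem_cons_self
    obtain ⟨j, hj⟩ := exists_sum_take_eq_of_isPA_one_cons hy hpw.of_cons.of_cons hB (by omega)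
      (hx _ ((List.Perm.swap c 1 _).trans hperm))
    exact add_sum_take_ne_add_sum_take hy₁₂ (fun _ => List.rel_of_pairwise_cons hpw.of_cons) k j
      (by omega)
  · rintro rfl x' hperm
    rw [List.perm_replicate.1 hperm]
    exact isPA_replicate_one hy

theorem stmt12 (y : List ℕ) (hy : ∀ a ∈ y, 0 < a) (hne : y ≠ [])
    (hinc : y.Chain' (· < ·)) :
    PAinv y = {List.replicate y.length 1} :=
  stmt12_general y hy hinc
end
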